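/- Let N = ⟨W, R, ⊩⟩ be a finite tree-like GL-model with valuation for the single variable p, and let M be the Veltman model obtained from N by the flat/natural end-point extension construction. Then for every modal formula B in the language with □ containing at most the propositional variable p, and every x ∈ W: N, x ⊩ B if and only if M, x ⊩ B†. -/
import Mathlib


/-- Formulas of the modal language with a single unary modality `□`.
Variable number `0` plays the role of the propositional variable `p`. -/
inductive GLForm : Type
  | bot : GLForm
  | var : ℕ → GLForm
  | imp : GLForm → GLForm → GLForm
  | box : GLForm → GLForm

namespace GLForm

/-- `¬A` abbreviates `A → ⊥`. -/
def neg (A : GLForm) : GLForm := A.imp .bot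

/-- `⊤` abbreviates `¬⊥`. -/
def top : GLForm := neg .bot

/-- `◇A` abbreviates `¬□¬A`. -/
def dia (A : GLForm) : GLForm := (A.neg.box).neg

/-- `A` contains at most the propositional variable `p` (i.e. variable number `0`). -/
def onlyP : GLForm → Prop
  | bot => True
  | var n => n = 0
  | imp A B => A.onlyP ∧ B.onlyP
  | box A => A.onlyP

end GLForm

/-- Formulas of the interpretability language: a unary modality `□` and a
binary modality `▷`. -/
inductive ILForm : Type
  | bot : ILForm
  | var : ℕ → ILForm
  | imp : ILForm → ILForm → ILForm
  | box : ILForm → ILForm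
  | rhd : ILForm → ILForm → ILForm

namespace ILForm

/-- `¬A` abbreviates `A → ⊥`. -/
def neg (A : ILForm) : ILForm := A.imp .bot

/-- `⊤` abbreviates `¬⊥`. -/
def top : ILForm := neg .bot

/-- `◇A` abbreviates `¬□¬A`. -/
def dia (A : ILForm) : ILForm := (A.neg.box).neg

end ILForm

/-- The translation of the variable `p`: the formula `◇◇⊤ → (⊤ ▷ ◇⊤)`. -/
def pDag : ILForm := (ILForm.top.dia.dia).imp (ILForm.top.rhd ILForm.top.dia)

/-- The translation `†` of one-variable `GL`-formulas into closed `IL`-formulas: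
`⊥† = ⊥`, `p† = ◇◇⊤ → (⊤ ▷ ◇⊤)`, `(A→B)† = A† → B†`, `(□A)† = □(◇◇⊤ → A†)`. -/
def dag : GLForm → ILForm
  | .bot => .bot
  | .var _ => pDag
  | .imp A B => (dag A).imp (dag B)
  | .box A => ((ILForm.top.dia.dia).imp (dag A)).box

/-- Kripke forcing for the language with `□`, over a frame `(W, R)` with
valuation `v` (variable number `0` is the variable `p`). -/
def KSat {W : Type} (R : W → W → Prop) (v : W → ℕ → Prop) : W → GLForm → Prop
  | x, .bot => False
  | x, .var n => v x n
  | x, .imp A B => KSat R v x A → KSat R v x B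
  | x, .box A => ∀ y, R x y → KSat R v y A

/-- Veltman forcing for the interpretability language, over `(W, R, S)` with
valuation `v`:  `x ⊩ □A` iff every `R`-successor of `x` forces `A`, and
`x ⊩ A ▷ B` iff every `R`-successor of `x` forcing `A` has an `S x`-successor
forcing `B`. -/
def ILSat {W : Type} (R : W → W → Prop) (S : W → W → W → Prop)
    (v : W → ℕ → Prop) : W → ILForm → Prop
  | x, .bot => False
  | x, .var n => v x n
  | x, .imp A B => ILSat R S v x A → ILSat R S v x B
  | x, .box A => ∀ y, R x y → ILSat R S v y A
  | x, .rhd A B => ∀ y, R x y → ILSat R S v y A → ∃ z, S x y z ∧ ILSat R S v z B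

/-- A `GL`-model: a Kripke model whose accessibility relation is transitive
and conversely well-founded. -/
structure GLModel where
  W : Type
  nonempty : Nonempty W
  R : W → W → Prop
  val : W → ℕ → Prop
  trans : Transitive R
  cwf : WellFounded (Function.swap R)

/-- A Veltman model (`IL`-model): `R` is transitive and conversely
well-founded, each `S x` is transitive, reflexive on the `R`-successors of
`x`, relates only `R`-successors of `x`, and contains `R` restricted to the
`R`-successors of `x`. -/
structure VeltmanModel where
  W : Type
  nonempty : Nonempty W
  R : W → W → Prop
  S : W → W → W → Prop
  val : W → ℕ → Prop
  R_trans : Transitive R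
  R_cwf : WellFounded (Function.swap R)
  S_trans : ∀ x, Transitive (S x)
  S_refl : ∀ x y, R x y → S x y y
  S_dom : ∀ x y z, S x y z → R x y ∧ R x z
  S_of_R : ∀ x y z, R x y → R y z → S x y z

/-- `e` is an end-point of the model: a world with no `R`-successors. -/
def GLModel.IsEndpoint (N : GLModel) (e : N.W) : Prop := ∀ y, ¬ N.R e y

/-- `N` is a finite tree-like `GL`-model: its set of worlds is finite, it has
a root below every other world, and its (transitive) accessibility relation is
the strict descendant relation of a tree, i.e. the predecessors of any world
are linearly ordered by `R`. -/
def GLModel.FiniteTreeLike (N : GLModel) : Prop :=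
  Finite N.W ∧ (∃ r : N.W, ∀ x, x = r ∨ N.R r x) ∧
    ∀ x y z : N.W, N.R x z → N.R y z → (N.R x y ∨ x = y ∨ N.R y x)

/-- The set `E` of end-points of `N`. -/
def Endpoints (N : GLModel) : Type := {e : N.W // N.IsEndpoint e}

/-- The extended set of worlds `W' = W ⊎ E♭ ⊎ E♮` (two fresh disjoint copies of
the end-points are added). -/
def Wext (N : GLModel) : Type := N.W ⊕ (Endpoints N ⊕ Endpoints N)

/-- The copy of an old world `x ∈ W` inside `W'`. -/
def old (N : GLModel) (x : N.W) : Wext N := Sum.inl x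

/-- The world `e♭` added above the end-point `e`. -/
def flatPt (N : GLModel) (e : Endpoints N) : Wext N := Sum.inr (Sum.inl e)

/-- The world `e♮` added above `e♭`. -/
def natPt (N : GLModel) (e : Endpoints N) : Wext N := Sum.inr (Sum.inr e)

/-- The relation `R ∪ {(e, e♭) : e ∈ E} ∪ {(e♭, e♮) : e ∈ E}` on `W'`,
whose transitive closure is the new accessibility relation `R'`. -/
def baseR (N : GLModel) : Wext N → Wext N → Prop :=
  fun a b =>
    match a, b with
    | Sum.inl x, Sum.inl y => N.R x y
    | Sum.inl x, Sum.inr (Sum.inl e) => x = e.val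
    | Sum.inr (Sum.inl e), Sum.inr (Sum.inr e') => e = e'
    | _, _ => False

/-- The new accessibility relation `R'`: the transitive closure of
`R ∪ {(e, e♭) : e ∈ E} ∪ {(e♭, e♮) : e ∈ E}`. -/
def Rext (N : GLModel) : Wext N → Wext N → Prop := Relation.TransGen (baseR N)

/-- The generating relation for `S'_x` when `x ∈ W` is an old world: the
restriction of `R'` to `{y : x R' y}`, together with the pairs `(e♮, e♭)` for
those end-points `e` with `N, x ⊩ p` and `x R⁼ e`. -/
def baseS (N : GLModel) (x : N.W) : Wext N → Wext N → Prop :=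
  fun y z =>
    (Rext N (old N x) y ∧ Rext N (old N x) z ∧ Rext N y z) ∨
    (∃ e : Endpoints N, y = natPt N e ∧ z = flatPt N e ∧
      N.val x 0 ∧ (N.R x e.val ∨ x = e.val))

/-- The family `S'` of the Veltman model obtained by the flat/natural
end-point extension construction: `S'_{e♭} = {(e♮, e♮)}`, `S'_{e♮} = ∅`, and
for `x ∈ W`, `S'_x` is the smallest transitive and reflexive relation on
`{y : x R' y}` containing the restriction of `R'` to `{y : x R' y}` and the
pairs `(e♮, e♭)` for every end-point `e` with `N, x ⊩ p` and `x R⁼ e`. -/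
def Sext (N : GLModel) : Wext N → Wext N → Wext N → Prop :=
  fun a y z =>
    match a with
    | Sum.inl x => Rext N (old N x) y ∧ Rext N (old N x) z ∧
        Relation.ReflTransGen (baseS N x) y z
    | Sum.inr (Sum.inl e) => y = natPt N e ∧ z = natPt N e
    | Sum.inr (Sum.inr _) => False

section Aux

variable (N : GLModel)

lemma exists_endpoint (x : N.W) : ∃ e : Endpoints N, x = e.val ∨ N.R x e.val := by
  obtain ⟨m, hm, hmin⟩ := N.cwf.has_min {y | x = y ∨ N.R x y} ⟨x, Or.inl rfl⟩
  refine ⟨⟨m, fun z hz => ?_⟩, hm⟩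
  refine hmin z ?_ hz
  rcases hm with h | h
  · exact Or.inr (h ▸ hz)
  · exact Or.inr (N.trans h hz)

lemma not_baseR_nat {e : Endpoints N} {w : Wext N} : ¬ baseR N (natPt N e) w := by
  rcases w with y | e' | e' <;> exact fun h => h

lemma not_rext_nat {e : Endpoints N} {w : Wext N} : ¬ Rext N (natPt N e) w := by
  intro h
  induction h with
  | single h => exact not_baseR_nat N h
  | tail _ _ ih => exact ih

lemma rext_flat_iff {e : Endpoints N} {w : Wext N} :
    Rext N (flatPt N e) w ↔ w = natPt N e := by
  constructor
  · intro h
    induction h with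
    | single h =>
      rename_i b
      rcases b with y | e' | e'
      · exact False.elim h
      · exact False.elim h
      · exact congrArg (natPt N) (Eq.symm h)
    | tail _ step ih =>
      subst ih
      exact (not_baseR_nat N step).elim
  · rintro rfl
    exact Relation.TransGen.single (show baseR N (flatPt N e) (natPt N e) from rfl)

lemma rext_old_iff {x : N.W} {w : Wext N} :
    Rext N (old N x) w ↔
      (∃ y, w = old N y ∧ N.R x y) ∨
      (∃ e : Endpoints N, (w = flatPt N e ∨ w = natPt N e) ∧
        (x = e.val ∨ N.R x e.val)) := by
  constructor
  · intro h
    induction h with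
    | single h =>
      rename_i b
      rcases b with y | e | e
      · exact Or.inl ⟨y, rfl, h⟩
      · exact Or.inr ⟨e, Or.inl rfl, Or.inl h⟩
      · exact False.elim h
    | tail hab step ih =>
      rename_i b c
      rcases ih with ⟨y, rfl, hxy⟩ | ⟨e, heq, hxe⟩
      · rcases c with z | e | e
        · exact Or.inl ⟨z, rfl, N.trans hxy step⟩
        · exact Or.inr ⟨e, Or.inl rfl, Or.inr (step ▸ hxy)⟩
        · exact False.elim step
      · rcases heq with rfl | rfl
        · rcases c with z | e' | e'
          · exact False.elim step
          · exact False.elim step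
          · exact Or.inr ⟨e, Or.inr (congrArg (natPt N) (Eq.symm step)), hxe⟩
        · exact (not_baseR_nat N step).elim
  · rintro (⟨y, rfl, hxy⟩ | ⟨e, heq, hxe⟩)
    · exact Relation.TransGen.single (show baseR N (old N x) (old N y) from hxy)
    · have hflat : Rext N (old N x) (flatPt N e) := by
        rcases hxe with h | h
        · exact Relation.TransGen.single (show baseR N (old N x) (flatPt N e) from h)
        · exact Relation.TransGen.tail
            (Relation.TransGen.single (show baseR N (old N x) (old N e.val) from h))
            (show baseR N (old N e.val) (flatPt N e) from rfl)
      rcases heq with rfl | rfl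
      · exact hflat
      · exact hflat.tail (show baseR N (flatPt N e) (natPt N e) from rfl)

lemma ilsat_diatop_iff {W : Type} {R : W → W → Prop} {S : W → W → W → Prop}
    {v : W → ℕ → Prop} {w : W} :
    ILSat R S v w ILForm.top.dia ↔ ∃ y, R w y := by
  constructor
  · intro h
    by_contra hc
    push_neg at hc
    exact h fun y hy => absurd hy (hc y)
  · rintro ⟨y, hy⟩ h
    exact h y hy (fun hb => hb)

lemma ilsat_ddtop_iff {W : Type} {R : W → W → Prop} {S : W → W → W → Prop}
    {v : W → ℕ → Prop} {w : W} :
    ILSat R S v w ILForm.top.dia.dia ↔ ∃ y, R w y ∧ ∃ z, R y z := by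
  constructor
  · intro h
    by_contra hc
    push_neg at hc
    refine h fun y hy hd => ?_
    obtain ⟨z, hz⟩ := ilsat_diatop_iff.mp hd
    exact hc y hy z hz
  · rintro ⟨y, hy, hz⟩ h
    exact h y hy (ilsat_diatop_iff.mpr hz)

lemma old_dtop {v : Wext N → ℕ → Prop} (x : N.W) :
    ILSat (Rext N) (Sext N) v (old N x) ILForm.top.dia := by
  obtain ⟨e, he⟩ := exists_endpoint N x
  exact ilsat_diatop_iff.mpr ⟨flatPt N e, (rext_old_iff N).mpr (Or.inr ⟨e, Or.inl rfl, he⟩)⟩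

lemma old_ddtop {v : Wext N → ℕ → Prop} (x : N.W) :
    ILSat (Rext N) (Sext N) v (old N x) ILForm.top.dia.dia := by
  obtain ⟨e, he⟩ := exists_endpoint N x
  refine ilsat_ddtop_iff.mpr ⟨flatPt N e,
    (rext_old_iff N).mpr (Or.inr ⟨e, Or.inl rfl, he⟩),
    natPt N e, (rext_flat_iff N).mpr rfl⟩

lemma flat_not_ddtop {v : Wext N → ℕ → Prop} (e : Endpoints N) :
    ¬ ILSat (Rext N) (Sext N) v (flatPt N e) ILForm.top.dia.dia := by
  intro h
  obtain ⟨y, hy, z, hz⟩ := ilsat_ddtop_iff.mp h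
  rw [rext_flat_iff N] at hy
  subst hy
  exact not_rext_nat N hz

lemma nat_not_ddtop {v : Wext N → ℕ → Prop} (e : Endpoints N) :
    ¬ ILSat (Rext N) (Sext N) v (natPt N e) ILForm.top.dia.dia := by
  intro h
  obtain ⟨y, hy, -⟩ := ilsat_ddtop_iff.mp h
  exact not_rext_nat N hy

end Aux

/-- Let `N = ⟨W, R, ⊩⟩` be a finite tree-like `GL`-model (with a valuation for
the single variable `p`, i.e. variable number `0`), and let `M` be the Veltman
model obtained from `N` by the flat/natural end-point extension construction
(with an arbitrary valuation `v`, as only closed formulas are evaluated).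
Then for every modal formula `B` in the language with `□` containing at most
the propositional variable `p` and every `x ∈ W`:
`N, x ⊩ B` iff `M, x ⊩ B†`. -/
theorem sat_iff_sat_dag (N : GLModel) (hN : N.FiniteTreeLike)
    (v : Wext N → ℕ → Prop) (B : GLForm) (hB : B.onlyP) (x : N.W) :
    KSat N.R N.val x B ↔ ILSat (Rext N) (Sext N) v (old N x) (dag B) := by
  clear hN
  induction B generalizing x with
  | bot => simp [KSat, dag, ILSat]
  | var n =>
    have hn : n = 0 := hB
    subst hn
    show N.val x 0 ↔ ILSat (Rext N) (Sext N) v (old N x) pDag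
    constructor
    · intro hp _ y hy _
      rcases (rext_old_iff N).mp hy with ⟨w, rfl, hxw⟩ | ⟨e, heq, hxe⟩
      · exact ⟨old N w, ⟨hy, hy, Relation.ReflTransGen.refl⟩, old_dtop N w⟩
      · rcases heq with rfl | rfl
        · exact ⟨flatPt N e, ⟨hy, hy, Relation.ReflTransGen.refl⟩,
            ilsat_diatop_iff.mpr ⟨natPt N e, (rext_flat_iff N).mpr rfl⟩⟩
        · refine ⟨flatPt N e, ⟨hy, (rext_old_iff N).mpr (Or.inr ⟨e, Or.inl rfl, hxe⟩),
            Relation.ReflTransGen.single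
              (Or.inr ⟨e, rfl, rfl, hp, hxe.symm⟩)⟩,
            ilsat_diatop_iff.mpr ⟨natPt N e, (rext_flat_iff N).mpr rfl⟩⟩
    · intro h
      obtain ⟨e, he⟩ := exists_endpoint N x
      obtain ⟨z, hS, hz⟩ := h (old_ddtop N x) (natPt N e)
        ((rext_old_iff N).mpr (Or.inr ⟨e, Or.inr rfl, he⟩)) (fun hb => hb)
      obtain ⟨-, -, hrt⟩ := hS
      rcases Relation.ReflTransGen.cases_head hrt with rfl | ⟨c, hstep, -⟩
      · obtain ⟨y, hy⟩ := ilsat_diatop_iff.mp hz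
        exact (not_rext_nat N hy).elim
      · rcases hstep with ⟨-, -, hr⟩ | ⟨e', -, -, hp, -⟩
        · exact (not_rext_nat N hr).elim
        · exact hp
  | imp A C ihA ihC =>
    show (KSat N.R N.val x A → KSat N.R N.val x C) ↔
      (ILSat (Rext N) (Sext N) v (old N x) (dag A) →
        ILSat (Rext N) (Sext N) v (old N x) (dag C))
    exact imp_congr (ihA hB.1 x) (ihC hB.2 x)
  | box A ih =>
    show (∀ y, N.R x y → KSat N.R N.val y A) ↔
      (∀ w, Rext N (old N x) w →
        (ILSat (Rext N) (Sext N) v w ILForm.top.dia.dia →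
          ILSat (Rext N) (Sext N) v w (dag A)))
    constructor
    · intro h w hw hdd
      rcases (rext_old_iff N).mp hw with ⟨y, rfl, hxy⟩ | ⟨e, heq, -⟩
      · exact (ih hB y).mp (h y hxy)
      · rcases heq with rfl | rfl
        · exact (flat_not_ddtop N e hdd).elim
        · exact (nat_not_ddtop N e hdd).elim
    · intro h y hxy
      exact (ih hB y).mpr
        (h (old N y) ((rext_old_iff N).mpr (Or.inl ⟨y, rfl, hxy⟩)) (old_ddtop N y))
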